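/- arXiv:2604.14461 — 3 statements merged into one kernel-verified Lean document; each statement's English description precedes it below -/
import Mathlib

section
/- Let X be a countable structure in σF and F a finite substructure of X with rk_X(F) = α for some ordinal α < ∞. Then for every ordinal β < α there exists a finite substructure E of X with rk_X(E) = β. -/
open FirstOrder CategoryTheory

universe u v w

variable {L : FirstOrder.Language.{u, v}}

/-- In a relational language, any subset of a structure carries an induced structure. -/
noncomputable instance setStructure [L.IsRelational] {M : Type w} [L.Structure M] (s : Set M) :
    L.Structure s where
  funMap f _ := isEmptyElim f
  RelMap r x := Language.Structure.RelMap r fun i => (x i : M)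

/-- `(B, e)` is a prime extension of `F` within the class `K`:
`B ∈ K`, `F` embeds into `B` via `e`, and exactly one element of `B` is outside the image. -/
def IsPrimeExtOf [L.IsRelational] (K : Set (Bundled.{w} L.Structure)) {X : Type w}
    [L.Structure X] (F : Set X) (B : Bundled.{w} L.Structure) (e : F ↪[L] B) : Prop :=
  B ∈ K ∧ ∃! b : B, b ∉ Set.range e

/-- `z` realizes the prime extension `(B, e)` of `F` in `X`: the substructure `F ∪ {z}`
is isomorphic to `B` over `F` (via an isomorphism fixing `F` pointwise). -/
def IsRealization [L.IsRelational] {X : Type w} [L.Structure X]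
    (F : Set X) (B : Bundled.{w} L.Structure) (e : F ↪[L] B) (z : X) : Prop :=
  z ∉ F ∧ ∃ g : B ≃[L] (insert z F : Set X), ∀ a : F, (g (e a) : X) = ↑a

/-- `RankGE K X α F` means `rk_X(F) ≥ α`: the Kubiś–Shelah rank of the finite substructure `F`
of `X`, relative to the class `K`, is at least `α`.  (`rk_X(F) ≥ β + 1` iff every prime
extension of `F` in `K` has a realization `insert z F` in `X` of rank at least `β`;
the clauses for `0` and limits are folded into the single quantifier `∀ β < α`.) -/
noncomputable def RankGE [L.IsRelational] (K : Set (Bundled.{w} L.Structure)) (X : Type w)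
    [L.Structure X] : Ordinal.{w} → Set X → Prop :=
  WellFounded.fix (C := fun _ => Set X → Prop) Ordinal.lt_wf
    (fun α ih F => ∀ β, ∀ hβ : β < α,
      ∀ (B : Bundled.{w} L.Structure) (e : F ↪[L] B), IsPrimeExtOf K F B e →
        ∃ z : X, IsRealization F B e z ∧ ih β hβ (insert z F))


section Aux

variable [L.IsRelational] (K : Set (Bundled.{w} L.Structure)) (X : Type w) [L.Structure X]

lemma rankGE_iff (α : Ordinal.{w}) (F : Set X) :
    RankGE K X α F ↔ ∀ β, β < α →
      ∀ (B : Bundled.{w} L.Structure) (e : F ↪[L] B), IsPrimeExtOf K F B e →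
        ∃ z : X, IsRealization F B e z ∧ RankGE K X β (insert z F) := by
  unfold RankGE
  rw [WellFounded.fix_eq]

lemma rankGE_anti {α β : Ordinal.{w}} (h : β ≤ α) {F : Set X} (hα : RankGE K X α F) :
    RankGE K X β F := by
  rw [rankGE_iff] at hα ⊢
  exact fun γ hγ => hα γ (lt_of_lt_of_le hγ h)

lemma rankGE_limit {δ : Ordinal.{w}} (hδ : Order.IsSuccLimit δ) {F : Set X}
    (h : ∀ γ < δ, RankGE K X γ F) : RankGE K X δ F := by
  rw [rankGE_iff]
  intro γ hγ B e hBe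
  have h2 := h (γ + 1) (by rw [Ordinal.add_one_eq_succ]; exact hδ.succ_lt hγ)
  rw [rankGE_iff] at h2
  exact h2 γ (by rw [Ordinal.add_one_eq_succ]; exact Order.lt_succ γ) B e hBe

lemma rank_main : ∀ α : Ordinal.{w}, ∀ F : Set X, F.Finite →
    RankGE K X α F → ¬ RankGE K X (α + 1) F →
    ∀ β < α, ∃ E : Set X, E.Finite ∧ RankGE K X β E ∧ ¬ RankGE K X (β + 1) E := by
  intro α
  induction α using Ordinal.induction with
  | h α IH =>
    intro F hF hα₁ hα₂ β hβ
    -- extract the bad prime extension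
    rw [rankGE_iff] at hα₂
    push_neg at hα₂
    obtain ⟨γ, hγ, B, e, hBe, hbad⟩ := hα₂
    have hγα : γ = α := by
      rcases lt_or_eq_of_le (Order.lt_succ_iff.mp (by rwa [Ordinal.add_one_eq_succ] at hγ)) with h | h
      · exfalso
        rw [rankGE_iff] at hα₁
        obtain ⟨z, hz, hzr⟩ := hα₁ γ h B e hBe
        exact hbad z hz hzr
      · exact h
    rw [hγα] at hbad
    -- get a realization of rank ≥ β
    have hα₁' := hα₁
    rw [rankGE_iff] at hα₁'
    obtain ⟨z, hz, hzr⟩ := hα₁' β hβ B e hBe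
    set E : Set X := insert z F with hE
    have hEfin : E.Finite := hF.insert z
    have hEnot : ¬ RankGE K X α E := hbad z hz
    -- least ordinal where rank fails
    set S : Set Ordinal.{w} := {γ | ¬ RankGE K X γ E} with hS
    have hSne : S.Nonempty := ⟨α, hEnot⟩
    set δ := Ordinal.lt_wf.min S hSne with hδdef
    have hδS : ¬ RankGE K X δ E := Ordinal.lt_wf.min_mem S hSne
    have hδlt : ∀ γ < δ, RankGE K X γ E := by
      intro γ hγ
      by_contra hc
      exact Ordinal.lt_wf.not_lt_min S hc hγ
    have hδα : δ ≤ α := not_lt.mp (fun h => Ordinal.lt_wf.not_lt_min S hEnot h)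
    have hβδ : β < δ := by
      by_contra hc
      exact hδS (rankGE_anti K X (not_lt.mp hc) hzr)
    -- δ is a successor
    rcases Ordinal.zero_or_succ_or_isSuccLimit δ with h0 | ⟨δ', hδ'⟩ | hlim
    · exfalso
      apply hδS
      rw [rankGE_iff]
      intro γ hγ
      exact absurd hγ (by simp [h0, not_lt_zero])
    · have hδ'lt : δ' < δ := by rw [← hδ']; exact Order.lt_succ δ'
      have hr1 : RankGE K X δ' E := hδlt δ' hδ'lt
      have hr2 : ¬ RankGE K X (δ' + 1) E := by rw [Ordinal.add_one_eq_succ, hδ']; exact hδS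
      have hβδ' : β ≤ δ' := by
        rw [← hδ'] at hβδ
        exact Order.lt_succ_iff.mp hβδ
      rcases lt_or_eq_of_le hβδ' with hlt | heq
      · exact IH δ' (hδ'lt.trans_le hδα) E hEfin hr1 hr2 β hlt
      · exact ⟨E, hEfin, heq ▸ hr1, heq ▸ hr2⟩
    · exact absurd (rankGE_limit K X hlim hδlt) hδS

end Aux

/-- **Intermediate values for the rank** (Proposition 2.13): if `rk_X(F) = α < ∞`, then for
every `β < α` there is a finite substructure `E` of `X` with `rk_X(E) = β`. -/
theorem rank_intermediate_values [L.IsRelational] [Countable (Σ n, L.Relations n)]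
    (K : Set (Bundled.{w} L.Structure))
    (hKfin : ∀ M ∈ K, Finite M)
    (hKher : Language.Hereditary K)
    (hKiso : ∀ M N : Bundled.{w} L.Structure, Nonempty (M ≃[L] N) → (M ∈ K ↔ N ∈ K))
    (X : Type w) [L.Structure X] [Countable X] (hage : L.age X ⊆ K)
    (F : Set X) (hF : F.Finite)
    (α : Ordinal.{w}) (hα₁ : RankGE K X α F) (hα₂ : ¬ RankGE K X (α + 1) F)
    (β : Ordinal.{w}) (hβ : β < α) :
    ∃ E : Set X, E.Finite ∧ RankGE K X β E ∧ ¬ RankGE K X (β + 1) E := by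
  exact rank_main K X α F hF hα₁ hα₂ β hβ
end

section
/- Assume F is a Fraïssé class with Fraïssé limit U. Then for every countable structure X ∈ σF, rk(X) = ∞ if and only if U embeds into X. -/
open FirstOrder CategoryTheory

universe u v w

variable {L : FirstOrder.Language.{u, v}}

namespace KSProof

open FirstOrder Language Set

variable [L.IsRelational]

/-- The inclusion of a subset (with its induced structure) into the ambient structure. -/
def inclEmb {M : Type w} [L.Structure M] (s : Set M) : s ↪[L] M where
  toFun := Subtype.val
  inj' := Subtype.val_injective
  map_fun' := fun f _ => isEmptyElim f
  map_rel' := fun _ _ => Iff.rfl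

lemma fg_of_finite {M : Type w} [L.Structure M] [Finite M] : Structure.FG L M :=
  Structure.fg_iff_finite.2 ‹_›

variable {K : Set (Bundled.{w} L.Structure)} {X : Type w} [L.Structure X]

lemma rankGE_iff (K : Set (Bundled.{w} L.Structure)) (X : Type w) [L.Structure X]
    (α : Ordinal.{w}) (F : Set X) :
    RankGE K X α F ↔ ∀ β, β < α → ∀ (B : Bundled.{w} L.Structure) (e : F ↪[L] B),
      IsPrimeExtOf K F B e → ∃ z : X, IsRealization F B e z ∧ RankGE K X β (insert z F) := by
  unfold RankGE
  rw [WellFounded.fix_eq]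

lemma rankGE_mono {α β : Ordinal.{w}} (h : β ≤ α) {F : Set X} (hα : RankGE K X α F) :
    RankGE K X β F := by
  rw [rankGE_iff] at hα ⊢
  exact fun γ hγ => hα γ (hγ.trans_le h)

lemma exists_bound (K : Set (Bundled.{w} L.Structure)) (X : Type w) [L.Structure X] :
    ∃ δ : Ordinal.{w}, ∀ F : Set X, RankGE K X δ F → ∀ α, RankGE K X α F := by
  classical
  have h : ∀ F : Set X, ∃ γ : Ordinal.{w}, (∃ α, ¬ RankGE K X α F) → ¬ RankGE K X γ F := by
    intro F
    by_cases h : ∃ α, ¬ RankGE K X α F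
    · exact ⟨h.choose, fun _ => h.choose_spec⟩
    · exact ⟨0, fun h' => absurd h' h⟩
  choose c hc using h
  refine ⟨iSup c, fun F h α => ?_⟩
  by_contra h'
  exact hc F ⟨α, h'⟩ (rankGE_mono (Ordinal.le_iSup c F) h)

/-- The backward direction: if the Fraïssé limit embeds into `X`, all ranks are attained. -/
lemma rankGE_all {U : Type w} [L.Structure U]
    (hKfin : ∀ M ∈ K, Finite M)
    (hhom : L.IsUltrahomogeneous U) (hageU : L.age U = K)
    (j : U ↪[L] X) (α : Ordinal.{w}) :
    ∀ F : Set X, F ⊆ Set.range j → RankGE K X α F := by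
  induction α using Ordinal.induction with
  | h α IH =>
  intro F hF
  rw [rankGE_iff]
  rintro β hβ B e ⟨hBK, b₀, hb₀, hb₀u⟩
  haveI : Finite B := hKfin B hBK
  haveI : Finite F := Finite.of_injective e e.injective
  have hF'fin : (j ⁻¹' F).Finite :=
    Set.Finite.preimage j.injective.injOn (Set.toFinite F)
  haveI : Finite (j ⁻¹' F : Set U) := hF'fin.to_subtype
  -- the isomorphism between `j ⁻¹' F` and `F`
  have ρbij : Function.Bijective (fun x : (j ⁻¹' F : Set U) => (⟨j x, x.2⟩ : F)) := by
    constructor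
    · intro x y hxy
      exact Subtype.ext (j.injective (congrArg Subtype.val hxy))
    · rintro ⟨y, hy⟩
      obtain ⟨x, rfl⟩ := hF hy
      exact ⟨⟨x, hy⟩, rfl⟩
  let ρ : (j ⁻¹' F : Set U) ≃[L] F :=
    { toEquiv := Equiv.ofBijective _ ρbij
      map_fun' := fun f _ => isEmptyElim f
      map_rel' := fun r x => j.map_rel r fun i => ↑(x i) }
  have hρcoe : ∀ x : (j ⁻¹' F : Set U), (↑(ρ x) : X) = j ↑x := fun _ => rfl
  have hBage : B ∈ L.age U := by rw [hageU]; exact hBK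
  haveI : Nonempty (B ↪[L] U) := hBage.2
  obtain ⟨f', hf'⟩ := hhom.extend_embedding (fg_of_finite) (inclEmb (j ⁻¹' F))
    (e.comp ρ.toEmbedding)
  have hf'' : ∀ x : (j ⁻¹' F : Set U), (↑x : U) = f' (e (ρ x)) := by
    intro x
    have := congrFun (congrArg DFunLike.coe hf') x
    simp at this; exact this
  have key : ∀ a : F, j (f' (e a)) = ↑a := by
    intro a
    have h1 := hf'' (ρ.symm a)
    rw [Language.Equiv.apply_symm_apply] at h1
    rw [← h1, ← hρcoe (ρ.symm a), Language.Equiv.apply_symm_apply]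
  set z := j (f' b₀) with hzdef
  have hz : z ∉ F := by
    intro hzF
    have hmem : f' b₀ ∈ j ⁻¹' F := hzF
    have := hf'' ⟨f' b₀, hmem⟩
    exact hb₀ ⟨ρ ⟨f' b₀, hmem⟩, (f'.injective this.symm)⟩
  have hcover : ∀ b : B, b = b₀ ∨ ∃ a, e a = b := by
    intro b
    by_cases hb : b ∈ Set.range e
    · exact Or.inr hb
    · exact Or.inl (hb₀u b hb)
  have hmem : ∀ b : B, j (f' b) ∈ insert z F := by
    intro b
    rcases hcover b with rfl | ⟨a, rfl⟩
    · exact Set.mem_insert _ _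
    · rw [key a]; exact Set.mem_insert_of_mem _ a.2
  have gbij : Function.Bijective (fun b : B => (⟨j (f' b), hmem b⟩ : (insert z F : Set X))) := by
    constructor
    · intro b b' hbb'
      exact f'.injective (j.injective (congrArg Subtype.val hbb'))
    · rintro ⟨y, hy⟩
      rcases hy with rfl | hyF
      · exact ⟨b₀, rfl⟩
      · exact ⟨e ⟨y, hyF⟩, Subtype.ext (key ⟨y, hyF⟩)⟩
  let g : B ≃[L] (insert z F : Set X) :=
    { toEquiv := Equiv.ofBijective _ gbij
      map_fun' := fun f _ => isEmptyElim f
      map_rel' := fun r x => (j.map_rel r fun i => f' (x i)).trans (f'.map_rel r x) }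
  refine ⟨z, ⟨hz, g, fun a => key a⟩, IH β hβ _ ?_⟩
  rintro w (rfl | hw)
  · exact ⟨f' b₀, rfl⟩
  · exact hF hw

/-- The forward direction, abstractly: an "infinite-rank"-style predicate on finite subsets of
`X` with the realization property yields an embedding of the Fraïssé limit. -/
lemma embedding_of_inf {U : Type w} [L.Structure U] [Countable U]
    (hageU : L.age U = K)
    (hrel0 : ∀ (r : L.Relations 0) (x : Fin 0 → U) (y : Fin 0 → X),
      Structure.RelMap r x ↔ Structure.RelMap r y)
    (Inf : Set X → Prop)
    (hInf0 : Inf ∅)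
    (hstep : ∀ (F : Set X) (B : Bundled.{w} L.Structure) (e : F ↪[L] B), Inf F →
      IsPrimeExtOf K F B e → ∃ z, IsRealization F B e z ∧ Inf (insert z F)) :
    Nonempty (U ↪[L] X) := by
  classical
  rcases isEmpty_or_nonempty U with hU0 | hU0
  · refine ⟨⟨⟨fun x => isEmptyElim x, fun x => isEmptyElim x⟩,
      fun {k} f _ => isEmptyElim f, fun {k} r x => ?_⟩⟩
    cases k with
    | zero => exact (hrel0 r x _).symm
    | succ k => exact isEmptyElim (x 0)
  obtain ⟨u, hu⟩ := exists_surjective_nat U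
  -- the "good partial embedding" predicate
  let Good : ∀ n : ℕ, (Fin n → X) → Prop := fun n h =>
    (∀ i j : Fin n, u i = u j ↔ h i = h j) ∧
    (∀ (k : ℕ) (r : L.Relations k) (v : Fin k → Fin n),
      Structure.RelMap r (fun a => u (v a)) ↔ Structure.RelMap r (fun a => h (v a))) ∧
    Inf (Set.range h)
  have base : Good 0 (fun i => i.elim0) := by
    refine ⟨fun i => i.elim0, fun k r v => ?_, ?_⟩
    · cases k with
      | zero => exact hrel0 r _ _
      | succ k => exact isEmptyElim (v 0)
    · rw [Set.range_eq_empty]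
      exact hInf0
  have step : ∀ (n : ℕ) (h : Fin n → X), Good n h → ∃ z : X, Good (n+1) (Fin.snoc h z) := by
    rintro n h ⟨h1, h2, h3⟩
    by_cases hcase : ∃ i : Fin n, u i = u n
    · -- the new point repeats an old one
      obtain ⟨i₀, hi₀⟩ := hcase
      refine ⟨h i₀, ?_⟩
      have hrep : ∀ i : Fin (n+1), ∃ i' : Fin n,
          u (i' : ℕ) = u (i : ℕ) ∧ (Fin.snoc h (h i₀) : Fin (n+1) → X) i = h i' := by
        intro i
        induction i using Fin.lastCases with
        | last => exact ⟨i₀, by simpa using hi₀, by simp⟩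
        | cast i' => exact ⟨i', by simp, by simp⟩
      choose ρ hρ1 hρ2 using hrep
      refine ⟨fun i j => ?_, fun k r v => ?_, ?_⟩
      · rw [← hρ1 i, ← hρ1 j, hρ2, hρ2]
        exact h1 _ _
      · have e1 : (fun a => u ((v a : Fin (n+1)) : ℕ)) = fun a => u ((ρ (v a) : Fin n) : ℕ) :=
          funext fun a => (hρ1 (v a)).symm
        have e2 : (fun a => (Fin.snoc h (h i₀) : Fin (n+1) → X) (v a)) = fun a => h (ρ (v a)) :=
          funext fun a => hρ2 (v a)
        rw [e1, e2]
        exact h2 k r _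
      · have : Set.range (Fin.snoc h (h i₀) : Fin (n+1) → X) = Set.range h := by
          apply Set.Subset.antisymm
          · rintro _ ⟨i, rfl⟩
            induction i using Fin.lastCases with
            | last => simpa using ⟨i₀, rfl⟩
            | cast i' => simpa using ⟨i', rfl⟩
          · rintro _ ⟨i, rfl⟩
            exact ⟨i.castSucc, by simp⟩
        rw [this]
        exact h3
    · -- the new point is genuinely new : use a prime extension
      push_neg at hcase
      set F : Set X := Set.range h with hFdef
      set A : Set U := insert (u n) (Set.range fun i : Fin n => u i) with hAdef
      haveI : Finite (A : Set U) := ((Set.finite_range _).insert _).to_subtype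
      set B : Bundled.{w} L.Structure := ⟨(A : Set U), inferInstance⟩ with hBdef
      have hBK : B ∈ K := by
        rw [← hageU]
        exact ⟨fg_of_finite, ⟨inclEmb A⟩⟩
      have hix : ∀ x : F, ∃ i : Fin n, h i = ↑x := fun x => x.2
      choose ix hix using hix
      have emem : ∀ x : F, u (ix x) ∈ A :=
        fun x => Set.mem_insert_of_mem _ ⟨ix x, rfl⟩
      let e : F ↪[L] B :=
        { toFun := fun x => ⟨u (ix x), emem x⟩
          inj' := by
            intro x y hxy
            have : u (ix x : ℕ) = u (ix y : ℕ) := congrArg Subtype.val hxy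
            have := (h1 _ _).1 this
            rw [hix x, hix y] at this
            exact Subtype.ext this
          map_fun' := fun f _ => isEmptyElim f
          map_rel' := by
            intro k r x
            have e1 : (fun a => (↑(x a) : X)) = fun a => h (ix (x a)) :=
              funext fun a => (hix (x a)).symm
            show Structure.RelMap r (fun a => u (ix (x a) : ℕ)) ↔
              Structure.RelMap r (fun a => (↑(x a) : X))
            rw [e1]
            exact h2 k r _ }
      have ecoe : ∀ x : F, ((e x : B) : U) = u (ix x) := fun x => rfl
      have hcover : ∀ b : B, b = ⟨u n, Set.mem_insert _ _⟩ ∨ b ∈ Set.range e := by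
        rintro ⟨y, hy⟩
        rcases hy with rfl | ⟨i, rfl⟩
        · exact Or.inl rfl
        · refine Or.inr ⟨⟨h i, ⟨i, rfl⟩⟩, ?_⟩
          apply Subtype.ext
          show u (ix ⟨h i, _⟩ : ℕ) = u (i : ℕ)
          exact (h1 _ _).2 (hix ⟨h i, ⟨i, rfl⟩⟩)
      have hprime : IsPrimeExtOf K F B e := by
        refine ⟨hBK, ⟨u n, Set.mem_insert _ _⟩, ?_, ?_⟩
        · rintro ⟨x, hx⟩
          have : u (ix x : ℕ) = u n := congrArg Subtype.val hx
          exact hcase (ix x) this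
        · intro y hy
          rcases hcover y with h' | h'
          · exact h'
          · exact absurd h' hy
      obtain ⟨z, ⟨hzF, g, hg⟩, hInf'⟩ := hstep F B e h3 hprime
      have hgb₀ : (↑(g ⟨u n, Set.mem_insert _ _⟩) : X) = z := by
        obtain ⟨b, hb⟩ := g.surjective ⟨z, Set.mem_insert _ _⟩
        rcases hcover b with rfl | ⟨x, rfl⟩
        · rw [hb]
        · exfalso
          have : (↑(g (e x)) : X) = z := by rw [hb]
          rw [hg x] at this
          exact hzF (this ▸ x.2)
      refine ⟨z, fun i j => ?_, fun k r v => ?_, ?_⟩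
      · -- injectivity condition
        induction i using Fin.lastCases with
        | last =>
          induction j using Fin.lastCases with
          | last => simp
          | cast j' =>
            simp only [Fin.snoc_last, Fin.snoc_castSucc, Fin.val_last, Fin.coe_castSucc]
            constructor
            · intro hj; exact absurd hj.symm (hcase j')
            · intro hj; exact absurd hj.symm (fun hzr => hzF ⟨j', hzr⟩)
        | cast i' =>
          induction j using Fin.lastCases with
          | last =>
            simp only [Fin.snoc_last, Fin.snoc_castSucc, Fin.val_last, Fin.coe_castSucc]
            constructor
            · intro hj; exact absurd hj (hcase i')
            · intro hj; exact absurd hj (fun hzr => hzF ⟨i', hzr⟩)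
          | cast j' =>
            simp only [Fin.snoc_castSucc, Fin.coe_castSucc]
            exact h1 i' j'
      · -- relations condition
        have hmemψ : ∀ i' : Fin n, h i' ∈ F := fun i' => ⟨i', rfl⟩
        let ψ : Fin (n+1) → B := fun i =>
          Fin.lastCases ⟨u n, Set.mem_insert _ _⟩ (fun i' => e ⟨h i', hmemψ i'⟩) i
        have hψu : ∀ i : Fin (n+1), ((ψ i : B) : U) = u (i : ℕ) := by
          intro i
          induction i using Fin.lastCases with
          | last => simp [ψ]
          | cast i' =>
            have hli : ψ i'.castSucc = e ⟨h i', hmemψ i'⟩ := Fin.lastCases_castSucc ..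
            rw [hli, ecoe, Fin.coe_castSucc]
            exact (h1 _ _).2 (hix ⟨h i', hmemψ i'⟩)
        have hψg : ∀ i : Fin (n+1), (↑(g (ψ i)) : X) = (Fin.snoc h z : Fin (n+1) → X) i := by
          intro i
          induction i using Fin.lastCases with
          | last =>
            have hli : ψ (Fin.last n) = ⟨u n, Set.mem_insert _ _⟩ := Fin.lastCases_last ..
            rw [hli, hgb₀, Fin.snoc_last]
          | cast i' =>
            have hli : ψ i'.castSucc = e ⟨h i', hmemψ i'⟩ := Fin.lastCases_castSucc ..
            rw [hli, hg, Fin.snoc_castSucc]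
        have e1 : (fun a => u ((v a : Fin (n+1)) : ℕ)) = fun a => ((ψ (v a) : B) : U) :=
          funext fun a => (hψu (v a)).symm
        have e2 : (fun a => (Fin.snoc h z : Fin (n+1) → X) (v a)) = fun a => (↑(g (ψ (v a))) : X) :=
          funext fun a => (hψg (v a)).symm
        rw [e1, e2]
        exact ((g.map_rel r fun a => ψ (v a)).symm : _)
      · -- rank condition
        have : Set.range (Fin.snoc h z : Fin (n+1) → X) = insert z (Set.range h) := by
          apply Set.Subset.antisymm
          · rintro _ ⟨i, rfl⟩
            induction i using Fin.lastCases with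
            | last => simp
            | cast i' => simpa using Or.inr ⟨i', rfl⟩
          · rintro w hw
            rcases hw with rfl | ⟨i, rfl⟩
            · exact ⟨Fin.last n, by simp⟩
            · exact ⟨i.castSucc, by simp⟩
        rw [this]
        exact hInf'
  -- build the increasing sequence of good partial embeddings
  choose zfun hzfun using step
  let seq : ∀ n : ℕ, {h : Fin n → X // Good n h} := fun n =>
    Nat.rec ⟨fun i => i.elim0, base⟩ (fun m p => ⟨Fin.snoc p.1 (zfun m p.1 p.2),
      hzfun m p.1 p.2⟩) n
  have compat : ∀ (n : ℕ) (i : Fin n), (seq (n+1)).1 i.castSucc = (seq n).1 i := by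
    intro n i
    show (Fin.snoc (seq n).1 (zfun n (seq n).1 (seq n).2) : Fin (n+1) → X) i.castSucc
      = (seq n).1 i
    rw [Fin.snoc_castSucc]
  have mono : ∀ (m n : ℕ) (hmn : m ≤ n) (i : Fin m),
      (seq n).1 ⟨i, lt_of_lt_of_le i.2 hmn⟩ = (seq m).1 i := by
    intro m n hmn
    induction n, hmn using Nat.le_induction with
    | base => intro i; congr 1
    | succ n hmn IH =>
      intro i
      have : (⟨(i : ℕ), lt_of_lt_of_le i.2 (Nat.le_succ_of_le hmn)⟩ : Fin (n+1)) =
          (⟨(i : ℕ), lt_of_lt_of_le i.2 hmn⟩ : Fin n).castSucc := rfl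
      rw [this, compat]
      exact IH i
  let N : U → ℕ := fun x => (hu x).choose
  have hN : ∀ x, u (N x) = x := fun x => (hu x).choose_spec
  let j : U → X := fun x => (seq (N x + 1)).1 ⟨N x, Nat.lt_succ_self _⟩
  have key : ∀ (n : ℕ) (i : Fin n), (seq n).1 i = j (u i) := by
    intro n i
    set x := u (i : ℕ) with hx
    set m := max n (N x + 1) with hm
    have h1n : n ≤ m := le_max_left _ _
    have h2n : N x + 1 ≤ m := le_max_right _ _
    have hiu : u ((⟨(i : ℕ), lt_of_lt_of_le i.2 h1n⟩ : Fin m) : ℕ) =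
        u ((⟨N x, lt_of_lt_of_le (Nat.lt_succ_self _) h2n⟩ : Fin m) : ℕ) := by
      show u (i : ℕ) = u (N x)
      rw [hN x]
    have := ((seq m).2.1 _ _).1 hiu
    rw [mono n m h1n i] at this
    have h2 := mono (N x + 1) m h2n ⟨N x, Nat.lt_succ_self _⟩
    simp only [Fin.eta] at h2 this ⊢
    rw [this, h2]
  have inj : Function.Injective j := by
    intro x y hxy
    set m := max (N x + 1) (N y + 1) with hm
    have h1n : N x + 1 ≤ m := le_max_left _ _
    have h2n : N y + 1 ≤ m := le_max_right _ _
    have e1 : (seq m).1 ⟨N x, lt_of_lt_of_le (Nat.lt_succ_self _) h1n⟩ = j x := by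
      rw [mono (N x + 1) m h1n ⟨N x, Nat.lt_succ_self _⟩]
    have e2 : (seq m).1 ⟨N y, lt_of_lt_of_le (Nat.lt_succ_self _) h2n⟩ = j y := by
      rw [mono (N y + 1) m h2n ⟨N y, Nat.lt_succ_self _⟩]
    have := ((seq m).2.1 ⟨N x, lt_of_lt_of_le (Nat.lt_succ_self _) h1n⟩
      ⟨N y, lt_of_lt_of_le (Nat.lt_succ_self _) h2n⟩).2 (by rw [e1, e2, hxy])
    show x = y
    rw [← hN x, ← hN y]
    exact this
  refine ⟨⟨⟨j, inj⟩, fun {k} f _ => isEmptyElim f, fun {k} r x => ?_⟩⟩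
  set n := (Finset.univ.sup fun a : Fin k => N (x a)) + 1 with hn
  have hlt : ∀ a : Fin k, N (x a) < n :=
    fun a => Nat.lt_succ_of_le (Finset.le_sup (f := fun a : Fin k => N (x a)) (Finset.mem_univ a))
  let v : Fin k → Fin n := fun a => ⟨N (x a), hlt a⟩
  have e1 : (fun a => u ((v a : Fin n) : ℕ)) = x := funext fun a => hN (x a)
  have e2 : (fun a => (seq n).1 (v a)) = fun a => j (x a) := by
    funext a
    rw [key n (v a)]
    show j (u (N (x a))) = j (x a)
    rw [hN]
  have := (seq n).2.2.1 k r v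
  rw [e1, e2] at this
  exact this.symm

end KSProof

/-- **Proposition 3.8 (Kubiś–Shelah)**: for a Fraïssé class `K` with Fraïssé limit `U` and any
countable `X ∈ σK`, `rk(X) = ∞` (i.e. `rk(X) ≥ α` for every ordinal `α`) iff `U` embeds
into `X`. -/
theorem rank_infinite_iff_fraisse_limit_embeds [L.IsRelational]
    [Countable (Σ n, L.Relations n)]
    (K : Set (Bundled.{w} L.Structure))
    (hKfin : ∀ M ∈ K, Finite M)
    (hK : Language.IsFraisse K)
    (U : Type w) [L.Structure U] [Countable U] (hU : Language.IsFraisseLimit K U)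
    (X : Type w) [L.Structure X] [Countable X] (hage : L.age X ⊆ K) :
    (∀ α : Ordinal.{w}, RankGE K X α (∅ : Set X)) ↔ Nonempty (U ↪[L] X) := by
  constructor
  · intro H
    obtain ⟨δ, hδ⟩ := KSProof.exists_bound K X
    have hrel0 : ∀ (r : L.Relations 0) (x : Fin 0 → U) (y : Fin 0 → X),
        Language.Structure.RelMap r x ↔ Language.Structure.RelMap r y := by
      intro r x y
      haveI : IsEmpty (↥(∅ : Set X)) := by
        rw [Set.isEmpty_coe_sort]
      have hBage : (⟨(↥(∅ : Set X)), inferInstance⟩ : Bundled L.Structure) ∈ L.age X :=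
        ⟨KSProof.fg_of_finite, ⟨KSProof.inclEmb _⟩⟩
      have hBU : (⟨(↥(∅ : Set X)), inferInstance⟩ : Bundled L.Structure) ∈ L.age U := by
        rw [hU.age]
        exact hage hBage
      obtain ⟨g⟩ := hBU.2
      have hx : x = g ∘ (fun i => i.elim0) := funext fun i => i.elim0
      have hy : y = (KSProof.inclEmb (L := L) (∅ : Set X)) ∘ (fun i => i.elim0) :=
        funext fun i => i.elim0
      rw [hx, hy]
      exact (g.map_rel r _).trans ((KSProof.inclEmb (L := L) (∅ : Set X)).map_rel r _).symm
    refine KSProof.embedding_of_inf hU.age hrel0 (fun F => ∀ α, RankGE K X α F) H ?_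
    intro F B e hF hBe
    obtain ⟨z, hz1, hz2⟩ := (KSProof.rankGE_iff K X (Order.succ δ) F).1 (hF _) δ
      (Order.lt_succ δ) B e hBe
    exact ⟨z, hz1, hδ _ hz2⟩
  · rintro ⟨j⟩ α
    exact KSProof.rankGE_all hKfin hU.ultrahomogeneous hU.age j α ∅ (Set.empty_subset _)
end

section
/- Let T = A + B be the ordered sum of two tournaments A and B (i.e., all edges between A and B are directed from A to B). Let F be a finite subset of T with F ∩ A ≠ ∅, and let z ∈ B \ F. Then rk_T(F ∪ {z}) = 0. -/
/-- `r` is a tournament relation: for every pair of distinct elements, exactly one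
direction holds. -/
def IsTournament {T : Type*} (r : T → T → Prop) : Prop :=
  ∀ u v : T, u ≠ v → (r u v ↔ ¬ r v u)

/-- `TRankGE r α F` means `rk_T(F) ≥ α` for a finite subset `F` of the tournament `(T, r)`:
`rk_T(F) ≥ β + 1` iff for every `S ⊆ F` there is `z ∉ F` with `{w ∈ F | r z w} = S` and
`rk_T(F ∪ {z}) ≥ β` (the clauses for `0` and limit ordinals are folded into the single
quantifier `∀ β < α`). -/
def TRankGE {T : Type*} (r : T → T → Prop) : Ordinal → Set T → Prop :=
  WellFounded.fix (C := fun _ => Set T → Prop) Ordinal.lt_wf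
    (fun α ih F => ∀ β, ∀ hβ : β < α, ∀ S ⊆ F,
      ∃ z, z ∉ F ∧ (∀ w ∈ F, r z w ↔ w ∈ S) ∧ ih β hβ (insert z F))

/-- The ordered sum `A + B` of two tournaments: the original orientations within each part,
and every edge between the parts directed from `A` to `B`. -/
def sumTournament {A B : Type*} (rA : A → A → Prop) (rB : B → B → Prop) :
    A ⊕ B → A ⊕ B → Prop
  | .inl a, .inl a' => rA a a'
  | .inr b, .inr b' => rB b b'
  | .inl _, .inr _ => True
  | .inr _, .inl _ => False

lemma TRankGE_iff {T : Type*} (r : T → T → Prop) (α : Ordinal) (F : Set T) :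
    TRankGE r α F ↔ ∀ β, β < α → ∀ S ⊆ F,
      ∃ z, z ∉ F ∧ (∀ w ∈ F, r z w ↔ w ∈ S) ∧ TRankGE r β (insert z F) := by
  rw [TRankGE, WellFounded.fix_eq]

/-- **Cross-Piece Lemma** (Lemma 4.3): if `T = A + B` is an ordered sum of tournaments,
`F` is a finite subset of `T` meeting `A`, and `z ∈ B \ F`, then `rk_T(F ∪ {z}) = 0`. -/
theorem tournament_cross_piece {A B : Type*}
    (rA : A → A → Prop) (rB : B → B → Prop)
    (hA : IsTournament rA) (hB : IsTournament rB)
    (F : Set (A ⊕ B)) (hF : F.Finite)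
    (hFA : ∃ a : A, Sum.inl a ∈ F)
    (z : B) (hz : Sum.inr z ∉ F) :
    TRankGE (sumTournament rA rB) 0 (insert (Sum.inr z) F) ∧
    ¬ TRankGE (sumTournament rA rB) 1 (insert (Sum.inr z) F) := by
  obtain ⟨a, ha⟩ := hFA
  constructor
  · rw [TRankGE_iff]
    intro β hβ
    exact absurd hβ (not_lt_zero (a := β))
  · rw [TRankGE_iff]
    intro h
    obtain ⟨w, hw, hrel, -⟩ := h 0 zero_lt_one {Sum.inl a}
      (Set.singleton_subset_iff.mpr (Set.mem_insert_of_mem _ ha))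
    have h1 := (hrel (Sum.inl a) (Set.mem_insert_of_mem _ ha)).mpr rfl
    have h2 : ¬ sumTournament rA rB w (Sum.inr z) := by
      intro hc
      have := (hrel (Sum.inr z) (Set.mem_insert _ _)).mp hc
      simp at this
    cases w with
    | inl a' => exact h2 trivial
    | inr b => exact h1
end
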